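/- arXiv:1811.00866 — 3 statements merged into one kernel-verified Lean document; each statement's English description precedes it below -/
import Mathlib

section
/- Let l < 0 < u and suppose d ∈ [0, u] satisfies the tangency condition tanh(d) − tanh(l) = (1 − tanh(d)²)(d − l). Then for every y ∈ [l, u], tanh(y) ≤ tanh(l) + (1 − tanh(d)²)(y − l); that is, the line through the left endpoint (l, tanh(l)) with slope tanh'(d) is an upper bound for tanh on [l, u]. -/
/-!
Put `s = 1 - tanh d ^ 2` and `g y = tanh y - s y`, so that the claim reads `g y ≤ g l` and the
tangency condition reads `g l = g d`. Since `g' y = tanh d ^ 2 - tanh y ^ 2` and `tanh ^ 2` is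
increasing in `|y|`, `g` decreases on `(-∞, -d]`, increases on `[-d, d]` and decreases on
`[d, ∞)`. Hence `g y ≤ g d` for `y ≥ -d`, and `g y ≤ g l` for `l ≤ y ≤ -d`.
-/

open Set

namespace Real

theorem hasDerivAt_tanh (x : ℝ) : HasDerivAt tanh (1 - tanh x ^ 2) x := by
  have h := (hasDerivAt_sinh x).div (hasDerivAt_cosh x) (cosh_pos x).ne'
  rw [show sinh / cosh = tanh from funext fun y => (tanh_eq_sinh_div_cosh y).symm] at h
  refine h.congr_deriv ?_
  rw [tanh_eq_sinh_div_cosh]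
  field_simp

theorem tanh_le_tanh_iff {x y : ℝ} : tanh x ≤ tanh y ↔ x ≤ y := by
  rw [← artanh_le_artanh_iff ⟨neg_one_lt_tanh x, tanh_lt_one x⟩
    ⟨neg_one_lt_tanh y, tanh_lt_one y⟩, artanh_tanh, artanh_tanh]

theorem tanh_nonneg_iff {x : ℝ} : 0 ≤ tanh x ↔ 0 ≤ x := by
  simpa using tanh_le_tanh_iff (x := 0) (y := x)

theorem abs_tanh (x : ℝ) : |tanh x| = tanh |x| := by
  rcases le_total 0 x with hx | hx
  · rw [abs_of_nonneg hx, abs_of_nonneg (tanh_nonneg_iff.2 hx)]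
  · rw [abs_of_nonpos hx, tanh_neg, abs_of_nonpos]
    simpa using tanh_nonneg_iff.2 (neg_nonneg.2 hx)

theorem tanh_sq_le_tanh_sq_iff {x y : ℝ} : tanh x ^ 2 ≤ tanh y ^ 2 ↔ |x| ≤ |y| := by
  rw [sq_le_sq, abs_tanh, abs_tanh, tanh_le_tanh_iff]

end Real

open Real

theorem hasDerivAt_tanh_sub_tangentSlope_mul (d x : ℝ) :
    HasDerivAt (fun y => tanh y - (1 - tanh d ^ 2) * y) (tanh d ^ 2 - tanh x ^ 2) x :=
  ((hasDerivAt_tanh x).sub ((hasDerivAt_id' x).const_mul (1 - tanh d ^ 2))).congr_deriv (by ring)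

theorem continuous_tanh_sub_tangentSlope_mul (d : ℝ) :
    Continuous fun y => tanh y - (1 - tanh d ^ 2) * y :=
  continuous_iff_continuousAt.2 fun x =>
    (hasDerivAt_tanh_sub_tangentSlope_mul d x).continuousAt

section TangentSlope

variable {d : ℝ}

theorem antitoneOn_tanh_sub_tangentSlope_mul {D : Set ℝ} (hD : Convex ℝ D)
    (h : ∀ x ∈ interior D, |d| ≤ |x|) :
    AntitoneOn (fun y => tanh y - (1 - tanh d ^ 2) * y) D :=
  antitoneOn_of_hasDerivWithinAt_nonpos hD
    (continuous_tanh_sub_tangentSlope_mul d).continuousOn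
    (fun x _ => (hasDerivAt_tanh_sub_tangentSlope_mul d x).hasDerivWithinAt)
    fun x hx => sub_nonpos.2 (tanh_sq_le_tanh_sq_iff.2 (h x hx))

theorem monotoneOn_tanh_sub_tangentSlope_mul {D : Set ℝ} (hD : Convex ℝ D)
    (h : ∀ x ∈ interior D, |x| ≤ |d|) :
    MonotoneOn (fun y => tanh y - (1 - tanh d ^ 2) * y) D :=
  monotoneOn_of_hasDerivWithinAt_nonneg hD
    (continuous_tanh_sub_tangentSlope_mul d).continuousOn
    (fun x _ => (hasDerivAt_tanh_sub_tangentSlope_mul d x).hasDerivWithinAt)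
    fun x hx => sub_nonneg.2 (tanh_sq_le_tanh_sq_iff.2 (h x hx))

theorem tanh_sub_tangentSlope_mul_le_of_neg_le (hd : 0 ≤ d) {y : ℝ} (hy : -d ≤ y) :
    tanh y - (1 - tanh d ^ 2) * y ≤ tanh d - (1 - tanh d ^ 2) * d := by
  rcases le_total d y with hdy | hyd
  · refine antitoneOn_tanh_sub_tangentSlope_mul (convex_Ici d) (fun x hx => ?_)
      self_mem_Ici hdy hdy
    rw [interior_Ici] at hx
    rw [abs_of_nonneg hd]
    exact hx.out.le.trans (le_abs_self x)
  · refine monotoneOn_tanh_sub_tangentSlope_mul (convex_Icc (-d) d) (fun x hx => ?_)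
      ⟨hy, hyd⟩ ⟨neg_le_self hd, le_rfl⟩ hyd
    rw [interior_Icc] at hx
    exact abs_le.2 ⟨hx.1.le, hx.2.le⟩ |>.trans (le_abs_self d)

theorem antitoneOn_tanh_sub_tangentSlope_mul_Iic (hd : 0 ≤ d) :
    AntitoneOn (fun y => tanh y - (1 - tanh d ^ 2) * y) (Iic (-d)) := by
  refine antitoneOn_tanh_sub_tangentSlope_mul (convex_Iic (-d)) fun x hx => ?_
  rw [interior_Iic] at hx
  rw [abs_of_nonneg hd]
  linarith [neg_le_abs x, hx.out]

end TangentSlope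

theorem tanh_crown_upper_unstable_general (l u d : ℝ)
    (hd : d ∈ Set.Icc 0 u)
    (htangent : Real.tanh d - Real.tanh l = (1 - Real.tanh d ^ 2) * (d - l)) :
    ∀ y ∈ Set.Icc l u,
      Real.tanh y ≤ Real.tanh l + (1 - Real.tanh d ^ 2) * (y - l) := by
  rintro y ⟨hly, -⟩
  have hgap : tanh l - (1 - tanh d ^ 2) * l = tanh d - (1 - tanh d ^ 2) * d := by
    linarith
  suffices tanh y - (1 - tanh d ^ 2) * y ≤ tanh l - (1 - tanh d ^ 2) * l by linarith
  rcases le_total (-d) y with hdy | hyd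
  · exact hgap ▸ tanh_sub_tangentSlope_mul_le_of_neg_le hd.1 hdy
  · exact antitoneOn_tanh_sub_tangentSlope_mul_Iic hd.1 (hly.trans hyd) hyd hly

/-- CROWN linear upper bound for an unstable tanh neuron (`l < 0 < u`): the line through the
left endpoint `(l, tanh l)` with slope `tanh' d = 1 - tanh d ^ 2`, where `d ∈ [0, u]` is the
tangency point, is an upper bound for `tanh` on `[l, u]`. -/
theorem tanh_crown_upper_unstable (l u d : ℝ) (hl : l < 0) (hu : 0 < u)
    (hd : d ∈ Set.Icc 0 u)
    (htangent : Real.tanh d - Real.tanh l = (1 - Real.tanh d ^ 2) * (d - l)) :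
    ∀ y ∈ Set.Icc l u,
      Real.tanh y ≤ Real.tanh l + (1 - Real.tanh d ^ 2) * (y - l) :=
  tanh_crown_upper_unstable_general l u d hd htangent
end

section
/- For every l < 0 there exists d ≥ 0 such that tanh(d) − tanh(l) = (1 − tanh(d)²)(d − l); that is, the tangent line to tanh at the point d on the concave branch passes through the point (l, tanh(l)). -/
/-!
Let `g(d) = tanh d - tanh l - (1 - tanh² d)(d - l)`. At `d = 0` we have `g 0 = l - tanh l ≤ 0`,
because `|tanh x| ≤ |x|`. At `d = 1 - l` the slope `1 - tanh² d = cosh⁻² d` is already so small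
that `(d - l) / cosh² d ≤ tanh d`, since `d - l ≤ d² ≤ sinh² d ≤ sinh d cosh d`; as `tanh l ≤ 0`,
this gives `g d ≥ 0`. The intermediate value theorem gives a zero of `g` in `[0, 1 - l]`.
-/

open Real

namespace Real

lemma sinh_le_mul_cosh {x : ℝ} (hx : 0 ≤ x) : sinh x ≤ x * cosh x := by
  have hderiv (y : ℝ) : HasDerivAt (fun y => y * cosh y - sinh y) (y * sinh y) y :=
    (((hasDerivAt_id' y).mul (hasDerivAt_cosh y)).sub (hasDerivAt_sinh y)).congr_deriv (by ring)
  have hmono : MonotoneOn (fun y => y * cosh y - sinh y) (Set.Ici 0) := by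
    refine monotoneOn_of_hasDerivWithinAt_nonneg (convex_Ici 0)
      (fun y _ => (hderiv y).continuousAt.continuousWithinAt)
      (fun y _ => (hderiv y).hasDerivWithinAt) fun y hy => ?_
    rw [interior_Ici] at hy
    exact mul_nonneg hy.out.le (sinh_nonneg_iff.mpr hy.out.le)
  simpa using hmono Set.self_mem_Ici hx hx

lemma self_le_tanh {x : ℝ} (hx : x ≤ 0) : x ≤ tanh x := by
  have h := sinh_le_mul_cosh (neg_nonneg.mpr hx)
  rw [sinh_neg, cosh_neg] at h
  rw [tanh_eq_sinh_div_cosh, le_div_iff₀ (cosh_pos x)]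
  linarith

lemma tanh_nonpos {x : ℝ} (hx : x ≤ 0) : tanh x ≤ 0 := by
  rw [tanh_eq_sinh_div_cosh]
  exact div_nonpos_of_nonpos_of_nonneg (sinh_nonpos_iff.mpr hx) (cosh_pos x).le

lemma one_sub_tanh_sq (x : ℝ) : 1 - tanh x ^ 2 = (cosh x ^ 2)⁻¹ := by
  have hc : cosh x ^ 2 ≠ 0 := by positivity
  rw [tanh_eq_sinh_div_cosh, div_pow, one_sub_div hc, cosh_sq, add_sub_cancel_left, one_div]

@[fun_prop]
lemma continuous_tanh : Continuous tanh := by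
  simp_rw [funext tanh_eq_sinh_div_cosh]
  exact continuous_sinh.div continuous_cosh fun x => (cosh_pos x).ne'

end Real

noncomputable def tanhTangentDefect (l d : ℝ) : ℝ :=
  tanh d - tanh l - (1 - tanh d ^ 2) * (d - l)

lemma continuous_tanhTangentDefect (l : ℝ) : Continuous (tanhTangentDefect l) := by
  unfold tanhTangentDefect
  fun_prop

lemma tanhTangentDefect_zero_nonpos {l : ℝ} (hl : l ≤ 0) : tanhTangentDefect l 0 ≤ 0 := by
  simp only [tanhTangentDefect, tanh_zero]
  linarith [self_le_tanh hl]

lemma tanhTangentDefect_one_sub_nonneg {l : ℝ} (hl : l ≤ 0) :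
    0 ≤ tanhTangentDefect l (1 - l) := by
  set d := 1 - l
  have hd : 0 ≤ d := by linarith
  have hsinh : d ≤ sinh d := self_le_sinh_iff.mpr hd
  have hslope : d - l ≤ sinh d * cosh d :=
    calc d - l ≤ d ^ 2 := by nlinarith
      _ ≤ sinh d ^ 2 := by nlinarith
      _ ≤ sinh d * cosh d := by nlinarith [sinh_lt_cosh d]
  have htangent : (1 - tanh d ^ 2) * (d - l) ≤ tanh d := by
    rw [one_sub_tanh_sq, tanh_eq_sinh_div_cosh, inv_mul_eq_div,
      div_le_div_iff₀ (by positivity) (cosh_pos d)]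
    nlinarith [cosh_pos d]
  simp only [tanhTangentDefect]
  linarith [tanh_nonpos hl]

/-- For every `l < 0` there is a point `d ≥ 0` at which the tangent line of `tanh` passes
through `(l, tanh l)`, i.e. `tanh d - tanh l = (1 - tanh d ^ 2) * (d - l)`. -/
theorem tanh_tangent_point_exists (l : ℝ) (hl : l < 0) :
    ∃ d : ℝ, 0 ≤ d ∧ Real.tanh d - Real.tanh l = (1 - Real.tanh d ^ 2) * (d - l) := by
  obtain ⟨d, ⟨hd, -⟩, hzero⟩ := intermediate_value_Icc (by linarith : (0 : ℝ) ≤ 1 - l)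
    (continuous_tanhTangentDefect l).continuousOn
    ⟨tanhTangentDefect_zero_nonpos hl.le, tanhTangentDefect_one_sub_nonneg hl.le⟩
  refine ⟨d, hd, ?_⟩
  rw [tanhTangentDefect] at hzero
  linarith
end

section
/- Let σ(y) = 1/(1 + e^{−y}). For every l < 0 there exists d ≥ 0 such that σ(d) − σ(l) = σ(d)(1 − σ(d))(d − l); that is, the tangent line to σ at the point d on the concave branch passes through the point (l, σ(l)). -/
/-!
The gap `g d = σ d - σ l - σ' d (d - l)` is continuous in `d`. At `d = 0` it is `≤ 0`, because
`σ' 0 = 1/4` is the maximal slope of `σ`, so the mean value theorem bounds the chord from `l` to `0`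
by the tangent at `0`. As `d → ∞` the tangent term `σ d σ (-d) (d - l) ≈ d e^{-d}` vanishes, so
`g d → 1 - σ l > 0`. The intermediate value theorem gives a zero of `g` in `[0, ∞)`.
-/

noncomputable def sigmoid (y : ℝ) : ℝ := 1 / (1 + Real.exp (-y))

open Filter Topology

lemma sigmoid_eq_real_sigmoid : sigmoid = Real.sigmoid := by
  funext y
  rw [sigmoid, Real.sigmoid_def, one_div]

namespace Real

lemma sigmoid_mul_one_sub_le (x : ℝ) : sigmoid x * (1 - sigmoid x) ≤ 4⁻¹ := by
  nlinarith [sq_nonneg (sigmoid x - 2⁻¹)]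

lemma sigmoid_sub_sigmoid_le {x y : ℝ} (hxy : x ≤ y) : sigmoid y - sigmoid x ≤ 4⁻¹ * (y - x) :=
  image_sub_le_mul_sub_of_deriv_le differentiable_sigmoid
    (fun z => by rw [deriv_sigmoid]; exact sigmoid_mul_one_sub_le z) hxy

lemma tendsto_sigmoid_mul_one_sub_mul_sub_atTop (l : ℝ) :
    Tendsto (fun d => sigmoid d * (1 - sigmoid d) * (d - l)) atTop (𝓝 0) := by
  have hexp : Tendsto (fun d => d * exp (-d) - l * exp (-d)) atTop (𝓝 0) := by
    have hpow := tendsto_pow_mul_exp_neg_atTop_nhds_zero 1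
    simp only [pow_one] at hpow
    simpa using hpow.sub ((tendsto_exp_neg_atTop_nhds_zero).const_mul l)
  have hprod := (tendsto_sigmoid_atTop.mul tendsto_sigmoid_atTop).mul hexp
  rw [mul_zero] at hprod
  refine hprod.congr fun d => ?_
  rw [← sigmoid_neg, ← sigmoid_mul_rexp_neg]
  ring

end Real

/-- For every `l < 0` there is a point `d ≥ 0` at which the tangent line of the sigmoid passes
through `(l, σ l)`, i.e. `σ d - σ l = σ d * (1 - σ d) * (d - l)`. -/
theorem sigmoid_tangent_point_exists (l : ℝ) (hl : l < 0) :
    ∃ d : ℝ, 0 ≤ d ∧ sigmoid d - sigmoid l = sigmoid d * (1 - sigmoid d) * (d - l) := by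
  rw [sigmoid_eq_real_sigmoid]
  set gap : ℝ → ℝ := fun d =>
    Real.sigmoid d - Real.sigmoid l - Real.sigmoid d * (1 - Real.sigmoid d) * (d - l)
  have gap_continuous : Continuous gap := by fun_prop
  have gap_zero_nonpos : gap 0 ≤ 0 := by
    have chord_le := Real.sigmoid_sub_sigmoid_le hl.le
    simp only [gap, Real.sigmoid_zero] at chord_le ⊢
    linarith
  have gap_tendsto : Tendsto gap atTop (𝓝 (1 - Real.sigmoid l)) := by
    simpa using (Real.tendsto_sigmoid_atTop.sub_const (Real.sigmoid l)).sub
      (Real.tendsto_sigmoid_mul_one_sub_mul_sub_atTop l)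
  obtain ⟨D, hD_pos, hD_nonneg⟩ := ((gap_tendsto.eventually
    (lt_mem_nhds (sub_pos.2 (Real.sigmoid_lt_one l)))).and (eventually_ge_atTop 0)).exists
  obtain ⟨d, hd, hgap⟩ := intermediate_value_Icc hD_nonneg gap_continuous.continuousOn
    ⟨gap_zero_nonpos, hD_pos.le⟩
  exact ⟨d, hd.1, sub_eq_zero.1 hgap⟩
end
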